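/- arXiv:2301.08315 — 2 statements merged into one kernel-verified Lean document; each statement's English description precedes it below -/
import Mathlib

section
/- For every ℓ ≥ 1 and every ε > 0, the averaged Hermite coefficient B^ε_{2ℓ} = (ψ_{2ℓ}(ε) - ψ_{2ℓ}(-ε))/(2ε · (2ℓ)!), with ψ_q(t) = -H_{q-1}(t)φ(t), satisfies |B^ε_{2ℓ}| ≤ φ(0)/(2^ℓ ℓ!) = |B_{2ℓ}|, where B_{2ℓ} = H_{2ℓ}(0)φ(0)/(2ℓ)!. -/
open Polynomial Real

/-- the standard Gaussian density `φ(t) = (2π)^{-1/2} e^{-t²/2}` -/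
noncomputable def stdGaussian (t : ℝ) : ℝ := (2 * Real.pi) ^ (-(1:ℝ)/2) * Real.exp (-t ^ 2 / 2)

/-- `ψ_q(t) = -H_{q-1}(t) φ(t)` for `q ≥ 1` -/
noncomputable def psiHermite (q : ℕ) (t : ℝ) : ℝ :=
  -(Polynomial.aeval t (hermite (q - 1))) * stdGaussian t

/-!
Write `a_n = H_n φ`. Since `a_n' = -a_{n+1}` and `a_{n+1}' = (n+1) a_n - t a_{n+1}`, the energy
`a_n² + a_{n+1}² / (n+1)` has derivative `-2 t a_{n+1}² / (n+1)`, so it is maximal at `t = 0`.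
For even `n` the odd Hermite polynomial `H_{n+1}` vanishes at `0`, hence `|a_{2ℓ}| ≤ |a_{2ℓ}(0)|`
everywhere. As `ψ_{2ℓ}' = a_{2ℓ}`, the mean value theorem bounds the difference quotient of
`ψ_{2ℓ}` by `|a_{2ℓ}(0)| = (2ℓ-1)‼ φ(0)`, and `(2ℓ)! = 2^ℓ ℓ! (2ℓ-1)‼`.
-/

namespace Polynomial

theorem derivative_hermite_succ (n : ℕ) :
    derivative (hermite (n + 1)) = C ((n : ℤ) + 1) * hermite n := by
  ext k
  rw [coeff_derivative, coeff_C_mul, coeff_hermite, coeff_hermite]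
  have hparity : Even (n + 1 + (k + 1)) ↔ Even (n + k) := by
    simp only [Nat.even_iff]; omega
  split_ifs with h h' h'
  · rw [show n + 1 - (k + 1) = n - k by omega]
    have hchoose : ((n + 1) * n.choose k : ℤ) = ((n + 1).choose (k + 1) : ℤ) * ((k : ℤ) + 1) := by
      exact_mod_cast Nat.add_one_mul_choose_eq n k
    linear_combination ((-1 : ℤ) ^ ((n - k) / 2) * (n - k - 1).doubleFactorial) * hchoose.symm
  · exact absurd (hparity.mp h) h'
  · exact absurd (hparity.mpr h') h
  · simp

theorem aeval_zero_hermite_of_odd {n : ℕ} (hn : Odd n) : aeval (0 : ℝ) (hermite n) = 0 := by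
  simp [aeval_def, eval₂_at_zero, coeff_hermite_of_odd_add (n := n) (k := 0) hn]

theorem aeval_zero_hermite_two_mul (ℓ : ℕ) :
    aeval (0 : ℝ) (hermite (2 * ℓ)) = (-1) ^ ℓ * ((2 * ℓ - 1).doubleFactorial : ℝ) := by
  simpa [aeval_def, eval₂_at_zero] using congrArg (Int.cast : ℤ → ℝ) (coeff_hermite_explicit ℓ 0)

end Polynomial

theorem Nat.factorial_two_mul_eq_mul_doubleFactorial (ℓ : ℕ) :
    (2 * ℓ).factorial = 2 ^ ℓ * ℓ.factorial * (2 * ℓ - 1).doubleFactorial := by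
  cases ℓ with
  | zero => rfl
  | succ k =>
    rw [show 2 * (k + 1) = (2 * k + 1) + 1 by ring, Nat.factorial_eq_mul_doubleFactorial,
      show 2 * k + 1 + 1 = 2 * (k + 1) by ring, Nat.doubleFactorial_two_mul]
    rfl

theorem stdGaussian_pos (t : ℝ) : 0 < stdGaussian t := by
  unfold stdGaussian
  positivity

theorem hasDerivAt_stdGaussian (t : ℝ) : HasDerivAt stdGaussian (-t * stdGaussian t) t := by
  have hexponent : HasDerivAt (fun t : ℝ => -t ^ 2 / 2) (-t) t :=
    (((hasDerivAt_pow 2 t).neg).div_const 2).congr_deriv (by ring)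
  exact (hexponent.exp.const_mul _).congr_deriv (by rw [stdGaussian]; ring)

noncomputable def hermiteGaussian (n : ℕ) (t : ℝ) : ℝ := aeval t (hermite n) * stdGaussian t

theorem hasDerivAt_hermiteGaussian (n : ℕ) (t : ℝ) :
    HasDerivAt (hermiteGaussian n) (-hermiteGaussian (n + 1) t) t := by
  refine ((Polynomial.hasDerivAt_aeval (hermite n) t).mul
    (hasDerivAt_stdGaussian t)).congr_deriv ?_
  simp only [hermiteGaussian, hermite_succ, map_sub, map_mul, aeval_X]
  ring

theorem hermiteGaussian_add_two (n : ℕ) (t : ℝ) :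
    hermiteGaussian (n + 2) t = t * hermiteGaussian (n + 1) t - (n + 1) * hermiteGaussian n t := by
  simp only [hermiteGaussian, hermite_succ (n + 1), derivative_hermite_succ, map_sub, map_mul,
    aeval_X, aeval_C]
  simp only [algebraMap_int_eq, eq_intCast, Int.cast_add, Int.cast_natCast, Int.cast_one]
  ring

theorem apply_le_of_hasDerivAt_sign {f f' : ℝ → ℝ} {a : ℝ} (hf : ∀ x, HasDerivAt f (f' x) x)
    (hleft : ∀ x < a, 0 ≤ f' x) (hright : ∀ x, a < x → f' x ≤ 0) (t : ℝ) : f t ≤ f a := by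
  have hcont : Continuous f := continuous_iff_continuousAt.mpr fun x => (hf x).continuousAt
  rcases le_total t a with hta | hat
  · refine monotoneOn_of_hasDerivWithinAt_nonneg (convex_Iic a) hcont.continuousOn
      (fun x _ => (hf x).hasDerivWithinAt) (fun x hx => hleft x ?_) hta Set.self_mem_Iic hta
    simpa using hx
  · refine antitoneOn_of_hasDerivWithinAt_nonpos (convex_Ici a) hcont.continuousOn
      (fun x _ => (hf x).hasDerivWithinAt) (fun x hx => hright x ?_) Set.self_mem_Ici hat hat
    simpa using hx

theorem hermiteGaussian_energy_le (n : ℕ) (t : ℝ) :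
    hermiteGaussian n t ^ 2 + hermiteGaussian (n + 1) t ^ 2 / (n + 1)
      ≤ hermiteGaussian n 0 ^ 2 + hermiteGaussian (n + 1) 0 ^ 2 / (n + 1) := by
  set b := hermiteGaussian (n + 1)
  have hn : (0 : ℝ) < n + 1 := by positivity
  have hderiv : ∀ x, HasDerivAt
      (fun x => hermiteGaussian n x ^ 2 + b x ^ 2 / (n + 1)) (-2 * x * b x ^ 2 / (n + 1)) x := by
    intro x
    have hb := hasDerivAt_hermiteGaussian (n + 1) x
    rw [hermiteGaussian_add_two] at hb
    refine (((hasDerivAt_hermiteGaussian n x).pow 2).add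
      ((hb.pow 2).div_const (n + 1))).congr_deriv ?_
    field_simp
    ring
  refine apply_le_of_hasDerivAt_sign hderiv (fun x hx => ?_) (fun x hx => ?_) t
  · exact div_nonneg (mul_nonneg (by linarith) (sq_nonneg _)) hn.le
  · exact div_nonpos_of_nonpos_of_nonneg
      (mul_nonpos_of_nonpos_of_nonneg (by linarith) (sq_nonneg _)) hn.le

theorem abs_hermiteGaussian_two_mul_le (ℓ : ℕ) (t : ℝ) :
    |hermiteGaussian (2 * ℓ) t| ≤ |hermiteGaussian (2 * ℓ) 0| := by
  have hodd : hermiteGaussian (2 * ℓ + 1) 0 = 0 := by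
    rw [hermiteGaussian, aeval_zero_hermite_of_odd (odd_two_mul_add_one ℓ), zero_mul]
  have henergy := hermiteGaussian_energy_le (2 * ℓ) t
  rw [hodd, zero_pow two_ne_zero, zero_div, add_zero] at henergy
  have : 0 ≤ hermiteGaussian (2 * ℓ + 1) t ^ 2 / ((2 * ℓ : ℕ) + 1 : ℝ) := by positivity
  exact sq_le_sq.mp (by linarith)

theorem abs_hermiteGaussian_two_mul_add_one_sub_le (ℓ : ℕ) (x y : ℝ) :
    |hermiteGaussian (2 * ℓ + 1) x - hermiteGaussian (2 * ℓ + 1) y|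
      ≤ |hermiteGaussian (2 * (ℓ + 1)) 0| * |x - y| :=
  convex_univ.norm_image_sub_le_of_norm_hasDerivWithin_le
    (fun t _ => (hasDerivAt_hermiteGaussian (2 * ℓ + 1) t).hasDerivWithinAt)
    (fun t _ => by simpa [mul_add] using abs_hermiteGaussian_two_mul_le (ℓ + 1) t)
    (Set.mem_univ y) (Set.mem_univ x)

theorem abs_hermiteGaussian_two_mul_zero_div_factorial (ℓ : ℕ) :
    |hermiteGaussian (2 * ℓ) 0| / (2 * ℓ).factorial = stdGaussian 0 / (2 ^ ℓ * ℓ.factorial) := by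
  rw [hermiteGaussian, aeval_zero_hermite_two_mul, Nat.factorial_two_mul_eq_mul_doubleFactorial, abs_mul, abs_mul,
    abs_pow, abs_neg, abs_one, one_pow, one_mul, Nat.abs_cast, abs_of_pos (stdGaussian_pos 0)]
  have : (0 : ℝ) < (2 * ℓ - 1).doubleFactorial := by exact_mod_cast Nat.doubleFactorial_pos _
  push_cast
  field_simp

theorem Bcoef_eps_le_general (ℓ : ℕ) (hl : 1 ≤ ℓ) (ε : ℝ) :
    |(psiHermite (2 * ℓ) ε - psiHermite (2 * ℓ) (-ε)) / (2 * ε * Nat.factorial (2 * ℓ))|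
        ≤ stdGaussian 0 / (2 ^ ℓ * Nat.factorial ℓ) ∧
    stdGaussian 0 / (2 ^ ℓ * Nat.factorial ℓ)
        = |(Polynomial.aeval (0:ℝ) (hermite (2 * ℓ))) * stdGaussian 0 / Nat.factorial (2 * ℓ)| := by
  obtain ⟨k, rfl⟩ : ∃ k, ℓ = k + 1 := ⟨ℓ - 1, by omega⟩
  have hψ : ∀ t, psiHermite (2 * (k + 1)) t = -hermiteGaussian (2 * k + 1) t := fun t => by
    simp only [psiHermite, hermiteGaussian, show 2 * (k + 1) - 1 = 2 * k + 1 by omega, neg_mul]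
  rw [← abs_hermiteGaussian_two_mul_zero_div_factorial]
  refine ⟨?_, by rw [abs_div, Nat.abs_cast, hermiteGaussian]⟩
  rw [abs_div, abs_mul, Nat.abs_cast, hψ, hψ, neg_sub_neg]
  refine div_le_of_le_mul₀ (by positivity) (by positivity) ?_
  have hfact : (0 : ℝ) < (2 * (k + 1)).factorial := by positivity
  calc |hermiteGaussian (2 * k + 1) (-ε) - hermiteGaussian (2 * k + 1) ε|
      ≤ |hermiteGaussian (2 * (k + 1)) 0| * |-ε - ε| :=
        abs_hermiteGaussian_two_mul_add_one_sub_le k (-ε) ε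
    _ = |hermiteGaussian (2 * (k + 1)) 0| / (2 * (k + 1)).factorial
          * (|2 * ε| * (2 * (k + 1)).factorial) := by
        rw [show -ε - ε = -(2 * ε) by ring, abs_neg]
        field_simp

theorem Bcoef_eps_le (ℓ : ℕ) (hl : 1 ≤ ℓ) (ε : ℝ) (hε : 0 < ε) :
    |(psiHermite (2 * ℓ) ε - psiHermite (2 * ℓ) (-ε)) / (2 * ε * Nat.factorial (2 * ℓ))|
        ≤ stdGaussian 0 / (2 ^ ℓ * Nat.factorial ℓ) ∧
    stdGaussian 0 / (2 ^ ℓ * Nat.factorial ℓ)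
        = |(Polynomial.aeval (0:ℝ) (hermite (2 * ℓ))) * stdGaussian 0 / Nat.factorial (2 * ℓ)| :=
  Bcoef_eps_le_general ℓ hl ε
end

section
/- Let (Ω, μ) be a measure space and K: ℍ × Ω → ℝ a kernel with ∫_Ω K(x,w)K(y,w) dμ(w) = F(d(x,y)) for a function F: [0,∞) → ℝ, where (ℍ, d, m) is a metric measure space. Then for every q ≥ 1, r ∈ {1,…,q-1}, and measurable B ⊆ ℍ of finite measure, the squared L²-norm of the r-contraction of f = ∫_B K(x,·)^{⊗q} dm(x) with itself equals ∫_{B⁴} F(d(x,y))^r F(d(y,z))^{q-r} F(d(z,w))^r F(d(w,x))^{q-r} dm⁴(x,y,z,w). -/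
/-!
Writing `f(u) = ∫_B ∏ K(x, uᵢ) dm(x)` and integrating out the `r` contracted variables by Fubini,
each pair of kernels `K(x, s)K(y, s)` integrates to `G(x, y) = F(d(x, y))`, so
`(f ⊗_r f)(t₁, t₂) = ∫_{B²} ∏ K(x, t₁ᵢ) ∏ K(y, t₂ⱼ) G(x, y)^r`.
Squaring gives an integral over `B⁴`, and integrating out `t₁` and `t₂` in the same way produces
the remaining factors `G^(q-r)`. Boundedness of `K` and finiteness of `μ` and `m|_B` make every
exchange of integrals legitimate.
-/

open MeasureTheory

/-- `f(t) = ∫_B ∏_i K(x, t_i) dm(x)`, the kernel of the `q`-th polyspectrum,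
indexed by an arbitrary finite index set. -/
noncomputable def kernelIntegral {H Ω : Type*} [MeasurableSpace H]
    (m : Measure H) (K : H → Ω → ℝ) (B : Set H) {ι : Type*} [Fintype ι]
    (t : ι → Ω) : ℝ :=
  ∫ x in B, ∏ i, K x (t i) ∂m

/-- the `r`-contraction `f ⊗_r f` of the polyspectrum kernel with itself. -/
noncomputable def kernelContraction {H Ω : Type*} [MeasurableSpace H] [MeasurableSpace Ω]
    (m : Measure H) (μ : Measure Ω) (K : H → Ω → ℝ) (B : Set H) (q r : ℕ)
    (t : (Fin (q - r) → Ω) × (Fin (q - r) → Ω)) : ℝ :=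
  ∫ s : Fin r → Ω,
      kernelIntegral m K B (Sum.elim t.1 s) * kernelIntegral m K B (Sum.elim t.2 s)
    ∂(Measure.pi fun _ => μ)

open Function

section BoundedFubini

variable {α β γ δ ε : Type*} [MeasurableSpace α] [MeasurableSpace β] [MeasurableSpace γ]
  [MeasurableSpace δ] [MeasurableSpace ε]

theorem integral_mul_integral_eq_integral_prod_of_norm_le
    {ν₁ : Measure α} {ν₂ : Measure β} {ρ : Measure γ}
    [IsFiniteMeasure ν₁] [IsFiniteMeasure ν₂] [IsFiniteMeasure ρ]
    {φ : α → γ → ℝ} {ψ : β → γ → ℝ} (hφ : Measurable (uncurry φ)) (hψ : Measurable (uncurry ψ))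
    {Cφ Cψ : ℝ} (hφC : ∀ a s, ‖φ a s‖ ≤ Cφ) (hψC : ∀ b s, ‖ψ b s‖ ≤ Cψ) :
    ∫ s, (∫ a, φ a s ∂ν₁) * (∫ b, ψ b s ∂ν₂) ∂ρ
      = ∫ p : α × β, ∫ s, φ p.1 s * ψ p.2 s ∂ρ ∂(ν₁.prod ν₂) := by
  simp_rw [← integral_prod_mul]
  exact integral_integral_swap <| .of_bound (by fun_prop) (Cφ * Cψ)
    (.of_forall fun _ => norm_mul_le_of_le (hφC _ _) (hψC _ _))

theorem integral_prod_prod_of_norm_le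
    {ν₁ : Measure α} {ν₂ : Measure β} {ν₃ : Measure δ} {ν₄ : Measure ε}
    [IsFiniteMeasure ν₁] [IsFiniteMeasure ν₂] [IsFiniteMeasure ν₃] [IsFiniteMeasure ν₄]
    {f : (α × β) × (δ × ε) → ℝ} (hf : Measurable f) {C : ℝ} (hC : ∀ z, ‖f z‖ ≤ C) :
    ∫ z, f z ∂((ν₁.prod ν₂).prod (ν₃.prod ν₄))
      = ∫ a, ∫ b, ∫ c, ∫ d, f ((a, b), (c, d)) ∂ν₄ ∂ν₃ ∂ν₂ ∂ν₁ := by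
  have hsection : Integrable (fun p => ∫ p', f (p, p') ∂(ν₃.prod ν₄)) (ν₁.prod ν₂) :=
    .of_bound hf.stronglyMeasurable.integral_prod_right'.aestronglyMeasurable _
      (.of_forall fun p => norm_integral_le_of_norm_le_const (.of_forall fun p' => hC (p, p')))
  rw [integral_prod _ (.of_bound hf.aestronglyMeasurable C (.of_forall hC)),
    integral_prod _ hsection]
  refine integral_congr_ae (.of_forall fun a => integral_congr_ae (.of_forall fun b => ?_))
  exact integral_prod _
    (.of_bound (hf.comp measurable_prodMk_left).aestronglyMeasurable C (.of_forall fun _ => hC _))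

end BoundedFubini

theorem integral_pi_prod_mul_prod {Ω ι : Type*} [MeasurableSpace Ω] [Fintype ι]
    (μ : Measure Ω) [SigmaFinite μ] (f g : Ω → ℝ) :
    ∫ s : ι → Ω, (∏ i, f (s i)) * ∏ i, g (s i) ∂(Measure.pi fun _ => μ)
      = (∫ w, f w * g w ∂μ) ^ Fintype.card ι := by
  simp_rw [← Finset.prod_mul_distrib]
  exact integral_fintype_prod_eq_pow (fun w => f w * g w)

theorem norm_prod_le_pow_card {ι : Type*} [Fintype ι] {f : ι → ℝ} {C : ℝ}
    (hf : ∀ i, ‖f i‖ ≤ C) : ‖∏ i, f i‖ ≤ C ^ Fintype.card ι := by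
  rw [norm_prod, ← Finset.card_univ, ← Finset.prod_const]
  gcongr with i
  exact hf i

noncomputable def kernelCovariance {H Ω : Type*} [MeasurableSpace Ω] (μ : Measure Ω)
    (K : H → Ω → ℝ) (x y : H) : ℝ :=
  ∫ w, K x w * K y w ∂μ

noncomputable def contractionIntegrand {H Ω : Type*} [MeasurableSpace Ω] (μ : Measure Ω)
    (K : H → Ω → ℝ) (r : ℕ) {ι : Type*} [Fintype ι] (x y : H) (t : (ι → Ω) × (ι → Ω)) : ℝ :=
  (∏ i, K x (t.1 i)) * (∏ i, K y (t.2 i)) * kernelCovariance μ K x y ^ r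

section Kernel

variable {H Ω : Type*} {K : H → Ω → ℝ}

theorem kernelCovariance_comm [MeasurableSpace Ω] (μ : Measure Ω) (x y : H) :
    kernelCovariance μ K x y = kernelCovariance μ K y x := by
  simp only [kernelCovariance, mul_comm]

theorem measurable_kernelCovariance [MeasurableSpace H] [MeasurableSpace Ω] {μ : Measure Ω}
    [SFinite μ] (hK : Measurable (uncurry K)) :
    Measurable (uncurry (kernelCovariance μ K)) := by
  have h : Measurable fun p : (H × H) × Ω => K p.1.1 p.2 * K p.1.2 p.2 := by fun_prop
  exact h.stronglyMeasurable.integral_prod_right'.measurable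

theorem norm_kernelCovariance_le [MeasurableSpace Ω] {μ : Measure Ω} [IsFiniteMeasure μ] {C : ℝ}
    (hC : ∀ x w, ‖K x w‖ ≤ C) (x y : H) :
    ‖kernelCovariance μ K x y‖ ≤ C ^ 2 * μ.real Set.univ := by
  rw [sq]
  exact norm_integral_le_of_norm_le_const (.of_forall fun w => norm_mul_le_of_le (hC x w) (hC y w))

theorem kernelIntegral_sum_elim [MeasurableSpace H] (m : Measure H) (B : Set H)
    {ι κ : Type*} [Fintype ι] [Fintype κ] (t : ι → Ω) (s : κ → Ω) :
    kernelIntegral m K B (Sum.elim t s) = ∫ x in B, (∏ i, K x (t i)) * ∏ j, K x (s j) ∂m := by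
  simp only [kernelIntegral, Fintype.prod_sum_type, Sum.elim_inl, Sum.elim_inr]

variable {ι : Type*} [Fintype ι] (r : ℕ)

theorem measurable_contractionIntegrand [MeasurableSpace H] [MeasurableSpace Ω] {μ : Measure Ω}
    [SFinite μ] (hK : Measurable (uncurry K)) :
    Measurable fun z : (H × H) × ((ι → Ω) × (ι → Ω)) =>
      contractionIntegrand μ K r z.1.1 z.1.2 z.2 := by
  have hG := measurable_kernelCovariance (μ := μ) hK
  unfold contractionIntegrand
  fun_prop

theorem norm_contractionIntegrand_le [MeasurableSpace Ω] {μ : Measure Ω} [IsFiniteMeasure μ]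
    {C : ℝ} (hC : ∀ x w, ‖K x w‖ ≤ C) (x y : H) (t : (ι → Ω) × (ι → Ω)) :
    ‖contractionIntegrand μ K r x y t‖
      ≤ C ^ Fintype.card ι * C ^ Fintype.card ι * (C ^ 2 * μ.real Set.univ) ^ r :=
  norm_mul_le_of_le (norm_mul_le_of_le (norm_prod_le_pow_card fun i => hC x (t.1 i))
    (norm_prod_le_pow_card fun i => hC y (t.2 i))) ((norm_pow _ _).trans_le
      (pow_le_pow_left₀ (norm_nonneg _) (norm_kernelCovariance_le hC x y) r))

theorem integral_contractionIntegrand_mul [MeasurableSpace Ω] {μ : Measure Ω} [SigmaFinite μ]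
    (x y z w : H) :
    ∫ t : (ι → Ω) × (ι → Ω), contractionIntegrand μ K r x y t * contractionIntegrand μ K r w z t
        ∂((Measure.pi fun _ => μ).prod (Measure.pi fun _ => μ))
      = kernelCovariance μ K x y ^ r * kernelCovariance μ K w z ^ r *
          (kernelCovariance μ K x w ^ Fintype.card ι *
            kernelCovariance μ K y z ^ Fintype.card ι) := by
  have hsplit : ∀ t : (ι → Ω) × (ι → Ω),
      contractionIntegrand μ K r x y t * contractionIntegrand μ K r w z t
        = kernelCovariance μ K x y ^ r * kernelCovariance μ K w z ^ r *
            (((∏ i, K x (t.1 i)) * ∏ i, K w (t.1 i)) * ((∏ i, K y (t.2 i)) * ∏ i, K z (t.2 i))) :=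
    fun t => by simp only [contractionIntegrand]; ring
  simp only [hsplit]
  rw [integral_const_mul, integral_prod_mul (fun t₁ : ι → Ω => (∏ i, K x (t₁ i)) * ∏ i, K w (t₁ i))
    (fun t₂ : ι → Ω => (∏ i, K y (t₂ i)) * ∏ i, K z (t₂ i)),
    integral_pi_prod_mul_prod, integral_pi_prod_mul_prod]
  rfl

end Kernel

section Contraction

variable {H Ω : Type*} [MeasurableSpace H] [MeasurableSpace Ω] {μ : Measure Ω} [IsFiniteMeasure μ]
  {K : H → Ω → ℝ} {m : Measure H} {B : Set H} [IsFiniteMeasure (m.restrict B)]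

theorem kernelContraction_eq_integral_prod (hK : Measurable (uncurry K)) {C : ℝ}
    (hC : ∀ x w, ‖K x w‖ ≤ C) (q r : ℕ) (t : (Fin (q - r) → Ω) × (Fin (q - r) → Ω)) :
    kernelContraction m μ K B q r t
      = ∫ p : H × H, contractionIntegrand μ K r p.1 p.2 t
          ∂((m.restrict B).prod (m.restrict B)) := by
  simp only [kernelContraction, kernelIntegral_sum_elim]
  rw [integral_mul_integral_eq_integral_prod_of_norm_le (by fun_prop) (by fun_prop)
    (fun x _ => norm_mul_le_of_le (norm_prod_le_pow_card fun _ => hC x _)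
      (norm_prod_le_pow_card fun _ => hC x _))
    (fun y _ => norm_mul_le_of_le (norm_prod_le_pow_card fun _ => hC y _)
      (norm_prod_le_pow_card fun _ => hC y _))]
  refine integral_congr_ae (.of_forall fun p => ?_)
  simp only [mul_mul_mul_comm _ (∏ j, K p.1 _)]
  rw [integral_const_mul, integral_pi_prod_mul_prod, Fintype.card_fin]
  rfl

theorem integral_sq_kernelContraction (hK : Measurable (uncurry K)) {C : ℝ}
    (hC : ∀ x w, ‖K x w‖ ≤ C) (q r : ℕ) :
    ∫ t, kernelContraction m μ K B q r t ^ 2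
        ∂((Measure.pi fun _ => μ).prod (Measure.pi fun _ => μ))
      = ∫ z : (H × H) × (H × H),
          kernelCovariance μ K z.1.1 z.1.2 ^ r * kernelCovariance μ K z.1.2 z.2.1 ^ (q - r) *
            kernelCovariance μ K z.2.1 z.2.2 ^ r * kernelCovariance μ K z.2.2 z.1.1 ^ (q - r)
          ∂(((m.restrict B).prod (m.restrict B)).prod ((m.restrict B).prod (m.restrict B))) := by
  -- Exchanging `x` and `y` in the second factor makes the variables come out in the cyclic order
  -- `x, y, z, w` of the quadruple integral.
  have hsq : ∀ t : (Fin (q - r) → Ω) × (Fin (q - r) → Ω), kernelContraction m μ K B q r t ^ 2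
      = (∫ p : H × H, contractionIntegrand μ K r p.1 p.2 t ∂((m.restrict B).prod (m.restrict B))) *
        ∫ p : H × H, contractionIntegrand μ K r p.2 p.1 t ∂((m.restrict B).prod (m.restrict B)) :=
    fun t => by rw [sq, kernelContraction_eq_integral_prod hK hC, ← integral_prod_swap]; rfl
  have hI := measurable_contractionIntegrand (ι := Fin (q - r)) (μ := μ) r hK
  rw [integral_congr_ae (.of_forall hsq), integral_mul_integral_eq_integral_prod_of_norm_le
    (φ := fun (p : H × H) t => contractionIntegrand μ K r p.1 p.2 t)
    (ψ := fun (p : H × H) t => contractionIntegrand μ K r p.2 p.1 t) hI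
    (hI.comp (f := fun z : (H × H) × _ => ((z.1.2, z.1.1), z.2)) (by fun_prop))
    (fun p t => norm_contractionIntegrand_le r hC p.1 p.2 t)
    (fun p t => norm_contractionIntegrand_le r hC p.2 p.1 t)]
  refine integral_congr_ae (.of_forall fun z => ?_)
  dsimp only
  rw [integral_contractionIntegrand_mul, Fintype.card_fin, kernelCovariance_comm μ z.2.2,
    kernelCovariance_comm μ z.1.1 z.2.2]
  ring

end Contraction

theorem contraction_norm_eq_quadruple_integral_general
    {H Ω : Type*} [MetricSpace H] [MeasurableSpace H] [MeasurableSpace Ω]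
    (m : Measure H) (μ : Measure Ω) [IsFiniteMeasure μ]
    (K : H → Ω → ℝ) (F : ℝ → ℝ)
    (hKmeas : Measurable (Function.uncurry K))
    (hKbd : ∃ Cb : ℝ, ∀ x w, |K x w| ≤ Cb)
    (hcov : ∀ x y : H, (∫ w, K x w * K y w ∂μ) = F (dist x y))
    (q r : ℕ)
    (B : Set H) (hBfin : m B < ⊤) :
    (∫ t : (Fin (q - r) → Ω) × (Fin (q - r) → Ω),
        (kernelContraction m μ K B q r t) ^ 2
      ∂((Measure.pi fun _ => μ).prod (Measure.pi fun _ => μ)))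
    = ∫ x in B, ∫ y in B, ∫ z in B, ∫ w in B,
        F (dist x y) ^ r * F (dist y z) ^ (q - r) *
          F (dist z w) ^ r * F (dist w x) ^ (q - r) ∂m ∂m ∂m ∂m := by
  obtain ⟨C, hC⟩ := hKbd
  have : IsFiniteMeasure (m.restrict B) := isFiniteMeasure_restrict.mpr hBfin.ne
  have hG := measurable_kernelCovariance (μ := μ) hKmeas
  have hGC := norm_kernelCovariance_le (μ := μ) hC
  set D := C ^ 2 * μ.real Set.univ
  rw [integral_sq_kernelContraction hKmeas hC, integral_prod_prod_of_norm_le (by fun_prop)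
    (C := D ^ r * D ^ (q - r) * D ^ r * D ^ (q - r)) fun z => by
      simp only [norm_mul, norm_pow]
      gcongr <;> exact hGC _ _]
  simp only [kernelCovariance, hcov]

theorem contraction_norm_eq_quadruple_integral
    {H Ω : Type*} [MetricSpace H] [MeasurableSpace H] [MeasurableSpace Ω]
    (m : Measure H) (μ : Measure Ω) [IsFiniteMeasure μ]
    (K : H → Ω → ℝ) (F : ℝ → ℝ)
    (hKmeas : Measurable (Function.uncurry K))
    (hKbd : ∃ Cb : ℝ, ∀ x w, |K x w| ≤ Cb)
    (hcov : ∀ x y : H, (∫ w, K x w * K y w ∂μ) = F (dist x y))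
    (q r : ℕ) (hr : 1 ≤ r) (hrq : r ≤ q - 1) (hq : 1 ≤ q)
    (B : Set H) (hB : MeasurableSet B) (hBfin : m B < ⊤) :
    (∫ t : (Fin (q - r) → Ω) × (Fin (q - r) → Ω),
        (kernelContraction m μ K B q r t) ^ 2
      ∂((Measure.pi fun _ => μ).prod (Measure.pi fun _ => μ)))
    = ∫ x in B, ∫ y in B, ∫ z in B, ∫ w in B,
        F (dist x y) ^ r * F (dist y z) ^ (q - r) *
          F (dist z w) ^ r * F (dist w x) ^ (q - r) ∂m ∂m ∂m ∂m :=
  contraction_norm_eq_quadruple_integral_general m μ K F hKmeas hKbd hcov q r B hBfin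
end
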